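/- arXiv:2206.01299 — 3 statements merged into one kernel-verified Lean document; each statement's English description precedes it below -/
import Mathlib

section
/- (One-step recursion for the message error) For every 2 ≤ j ≤ T, the message errors of the delta-compression scheme satisfy ‖δ_j‖² ≤ 2 c_Q² ℓ_a² ‖x_j − x_{j−1}‖² + 2 c_Q² ‖δ_{j−1}‖², and also δ_1 = 0. -/
/-!
The new message error is the compression error of the innovation `z = a (x j) - m (j - 1)`,
so `‖δ j‖ ≤ c_Q ‖z‖`. The innovation splits as `(a (x j) - a (x (j - 1))) + δ (j - 1)`, and
`‖p + q‖² ≤ 2 ‖p‖² + 2 ‖q‖²` together with the Lipschitz bound on the first summand gives the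
recursion.
-/

lemma sq_norm_le_of_norm_le_mul {E F : Type*} [SeminormedAddCommGroup E]
    [SeminormedAddCommGroup F] {v : E} {w : F} {c : ℝ} (h : ‖v‖ ≤ c * ‖w‖) :
    ‖v‖ ^ 2 ≤ c ^ 2 * ‖w‖ ^ 2 := by
  simpa only [mul_pow] using pow_le_pow_left₀ (norm_nonneg v) h 2

lemma sq_norm_add_le {E : Type*} [SeminormedAddCommGroup E] (p q : E) :
    ‖p + q‖ ^ 2 ≤ 2 * ‖p‖ ^ 2 + 2 * ‖q‖ ^ 2 :=
  calc ‖p + q‖ ^ 2 ≤ (‖p‖ + ‖q‖) ^ 2 := pow_le_pow_left₀ (norm_nonneg _) (norm_add_le p q) 2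
    _ ≤ 2 * ‖p‖ ^ 2 + 2 * ‖q‖ ^ 2 := by linarith [add_sq_le (a := ‖p‖) (b := ‖q‖)]

theorem delta_compression_one_step_recursion_general {d k : ℕ} (la cQ : ℝ)
    (a : EuclideanSpace ℝ (Fin d) → EuclideanSpace ℝ (Fin k))
    (ha : ∀ y z, ‖a y - a z‖ ≤ la * ‖y - z‖)
    (Q : EuclideanSpace ℝ (Fin k) → EuclideanSpace ℝ (Fin k))
    (hQ : ∀ z, ‖z - Q z‖ ≤ cQ * ‖z‖)
    (T : ℕ) (x : ℕ → EuclideanSpace ℝ (Fin d))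
    (m δ : ℕ → EuclideanSpace ℝ (Fin k))
    (hm1 : m 1 = a (x 1))
    (hm : ∀ j, 2 ≤ j → j ≤ T → m j = m (j - 1) + Q (a (x j) - m (j - 1)))
    (hδ : ∀ j, δ j = a (x j) - m j) :
    δ 1 = 0 ∧ ∀ j, 2 ≤ j → j ≤ T →
      ‖δ j‖ ^ 2 ≤ 2 * cQ ^ 2 * la ^ 2 * ‖x j - x (j - 1)‖ ^ 2 + 2 * cQ ^ 2 * ‖δ (j - 1)‖ ^ 2 := by
  refine ⟨by rw [hδ, hm1, sub_self], fun j hj2 hjT => ?_⟩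
  have hδ_eq : δ j = (a (x j) - m (j - 1)) - Q (a (x j) - m (j - 1)) := by
    rw [hδ, hm j hj2 hjT]; abel
  have hz_eq : a (x j) - m (j - 1) = (a (x j) - a (x (j - 1))) + δ (j - 1) := by
    rw [hδ]; abel
  calc ‖δ j‖ ^ 2 ≤ cQ ^ 2 * ‖a (x j) - m (j - 1)‖ ^ 2 := hδ_eq ▸ sq_norm_le_of_norm_le_mul (hQ _)
    _ ≤ cQ ^ 2 * (2 * ‖a (x j) - a (x (j - 1))‖ ^ 2 + 2 * ‖δ (j - 1)‖ ^ 2) := by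
      gcongr; exact hz_eq ▸ sq_norm_add_le _ _
    _ ≤ cQ ^ 2 * (2 * (la ^ 2 * ‖x j - x (j - 1)‖ ^ 2) + 2 * ‖δ (j - 1)‖ ^ 2) := by
      gcongr; exact sq_norm_le_of_norm_le_mul (ha _ _)
    _ = _ := by ring

/-- **One-step recursion for the message error** in the delta-compression scheme:
with `m 1 = a (x 1)` and `m j = m (j-1) + Q (a (x j) - m (j-1))`, the message errors
`δ j = a (x j) - m j` satisfy `δ 1 = 0` and, for `2 ≤ j ≤ T`,
`‖δ j‖² ≤ 2 c_Q² ℓ_a² ‖x j - x (j-1)‖² + 2 c_Q² ‖δ (j-1)‖²`. -/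
theorem delta_compression_one_step_recursion {d k : ℕ} (la cQ : ℝ) (hcQ : 0 ≤ cQ)
    (a : EuclideanSpace ℝ (Fin d) → EuclideanSpace ℝ (Fin k))
    (ha : ∀ y z, ‖a y - a z‖ ≤ la * ‖y - z‖)
    (Q : EuclideanSpace ℝ (Fin k) → EuclideanSpace ℝ (Fin k))
    (hQ : ∀ z, ‖z - Q z‖ ≤ cQ * ‖z‖)
    (T : ℕ) (x : ℕ → EuclideanSpace ℝ (Fin d))
    (m δ : ℕ → EuclideanSpace ℝ (Fin k))
    (hm1 : m 1 = a (x 1))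
    (hm : ∀ j, 2 ≤ j → j ≤ T → m j = m (j - 1) + Q (a (x j) - m (j - 1)))
    (hδ : ∀ j, δ j = a (x j) - m j) :
    δ 1 = 0 ∧ ∀ j, 2 ≤ j → j ≤ T →
      ‖δ j‖ ^ 2 ≤ 2 * cQ ^ 2 * la ^ 2 * ‖x j - x (j - 1)‖ ^ 2 + 2 * cQ ^ 2 * ‖δ (j - 1)‖ ^ 2 :=
  delta_compression_one_step_recursion_general la cQ a ha Q hQ T x m δ hm1 hm hδ
end

section
/- (Accumulated message-error bound for delta compression) The message errors of the delta-compression scheme satisfy (1 − 2 c_Q²) Σ_{j=1}^{T} ‖δ_j‖² ≤ 2 c_Q² ℓ_a² Σ_{j=2}^{T} ‖x_j − x_{j−1}‖². -/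
/-!
Since `m 1 = a (x 1)`, the first error vanishes. For `j ≥ 2` the error `δ j` is the
compression residual `z - Q z` of `z = a (x j) - m (j - 1) = (a (x j) - a (x (j - 1))) + δ (j - 1)`,
so `‖δ j‖² ≤ 2 c_Q² (ℓ_a² ‖x j - x (j - 1)‖² + ‖δ (j - 1)‖²)`. Summing over `j`, the shifted sum
of the `‖δ (j - 1)‖²` is at most the full sum of the `‖δ j‖²`, which is then moved to the left.
-/

open Finset

theorem sum_Icc_two_comp_sub_one {M : Type*} [AddCommMonoid M] (f : ℕ → M) (n : ℕ) :
    ∑ j ∈ Icc 2 n, f (j - 1) = ∑ j ∈ Icc 1 (n - 1), f j := by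
  obtain _ | n := n
  · rfl
  · have h := sum_map (Icc 1 n) (addRightEmbedding 1) fun j => f (j - 1)
    rw [map_add_right_Icc] at h
    simpa using h

theorem one_sub_mul_sum_Icc_le_of_le_mul_add_prev {e b : ℕ → ℝ} {c : ℝ} (hc : 0 ≤ c)
    (he : ∀ j, 0 ≤ e j) (he₁ : e 1 = 0) {n : ℕ}
    (hrec : ∀ j ∈ Icc 2 n, e j ≤ c * (b j + e (j - 1))) :
    (1 - c) * ∑ j ∈ Icc 1 n, e j ≤ c * ∑ j ∈ Icc 2 n, b j := by
  have hdrop : ∑ j ∈ Icc 1 n, e j = ∑ j ∈ Icc 2 n, e j := by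
    obtain _ | n := n
    · rfl
    · rw [← insert_Icc_add_one_left_eq_Icc (by omega), sum_insert (by simp), he₁, zero_add]
      rfl
  have hshift : ∑ j ∈ Icc 2 n, e (j - 1) ≤ ∑ j ∈ Icc 1 n, e j := by
    rw [sum_Icc_two_comp_sub_one]
    exact sum_le_sum_of_subset_of_nonneg (Icc_subset_Icc_right (by omega))
      fun j _ _ => he j
  have hsum : ∑ j ∈ Icc 2 n, e j ≤ c * ∑ j ∈ Icc 2 n, b j + c * ∑ j ∈ Icc 2 n, e (j - 1) := by
    rw [← mul_add, ← sum_add_distrib, mul_sum]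
    exact sum_le_sum hrec
  linarith [mul_le_mul_of_nonneg_left hshift hc]

section Compression

variable {E : Type*} [SeminormedAddCommGroup E] {Q : E → E} {c : ℝ}

theorem norm_sub_add_compress_le (hQ : ∀ z, ‖z - Q z‖ ≤ c * ‖z‖) (y m : E) :
    ‖y - (m + Q (y - m))‖ ≤ c * ‖y - m‖ := by
  rw [sub_add_eq_sub_sub]
  exact hQ (y - m)

theorem sq_norm_sub_add_compress_le (hQ : ∀ z, ‖z - Q z‖ ≤ c * ‖z‖) (y y' m : E) :
    ‖y - (m + Q (y - m))‖ ^ 2 ≤ 2 * c ^ 2 * (‖y - y'‖ ^ 2 + ‖y' - m‖ ^ 2) := by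
  calc ‖y - (m + Q (y - m))‖ ^ 2
      ≤ (c * ‖y - m‖) ^ 2 := pow_le_pow_left₀ (norm_nonneg _) (norm_sub_add_compress_le hQ y m) 2
    _ = c ^ 2 * ‖y - m‖ ^ 2 := mul_pow _ _ _
    _ ≤ c ^ 2 * (‖y - y'‖ + ‖y' - m‖) ^ 2 := by
        gcongr
        exact norm_sub_le_norm_sub_add_norm_sub y y' m
    _ ≤ c ^ 2 * (2 * (‖y - y'‖ ^ 2 + ‖y' - m‖ ^ 2)) := by gcongr; exact add_sq_le
    _ = 2 * c ^ 2 * (‖y - y'‖ ^ 2 + ‖y' - m‖ ^ 2) := by ring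

end Compression

theorem delta_compression_accumulated_error_bound_general {d k : ℕ} (la cQ : ℝ)
    (a : EuclideanSpace ℝ (Fin d) → EuclideanSpace ℝ (Fin k))
    (ha : ∀ y z, ‖a y - a z‖ ≤ la * ‖y - z‖)
    (Q : EuclideanSpace ℝ (Fin k) → EuclideanSpace ℝ (Fin k))
    (hQ : ∀ z, ‖z - Q z‖ ≤ cQ * ‖z‖)
    (T : ℕ) (x : ℕ → EuclideanSpace ℝ (Fin d))
    (m δ : ℕ → EuclideanSpace ℝ (Fin k))
    (hm1 : m 1 = a (x 1))
    (hm : ∀ j, 2 ≤ j → j ≤ T → m j = m (j - 1) + Q (a (x j) - m (j - 1)))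
    (hδ : ∀ j, δ j = a (x j) - m j) :
    (1 - 2 * cQ ^ 2) * ∑ j ∈ Finset.Icc 1 T, ‖δ j‖ ^ 2
      ≤ 2 * cQ ^ 2 * la ^ 2 * ∑ j ∈ Finset.Icc 2 T, ‖x j - x (j - 1)‖ ^ 2 := by
  have hrec : ∀ j ∈ Icc 2 T, ‖δ j‖ ^ 2 ≤
      2 * cQ ^ 2 * (la ^ 2 * ‖x j - x (j - 1)‖ ^ 2 + ‖δ (j - 1)‖ ^ 2) := by
    intro j hj
    obtain ⟨hj₂, hjT⟩ := mem_Icc.1 hj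
    rw [hδ, hδ, hm j hj₂ hjT]
    refine (sq_norm_sub_add_compress_le hQ _ (a (x (j - 1))) _).trans ?_
    gcongr
    rw [← mul_pow]
    exact pow_le_pow_left₀ (norm_nonneg _) (ha _ _) 2
  have hsum := one_sub_mul_sum_Icc_le_of_le_mul_add_prev (by positivity)
    (fun _ => by positivity) (by simp [hδ, hm1]) hrec
  rwa [← mul_sum, ← mul_assoc] at hsum

/-- **Accumulated message-error bound for delta compression**:
with `m 1 = a (x 1)` and `m j = m (j-1) + Q (a (x j) - m (j-1))`, the message errors
`δ j = a (x j) - m j` satisfy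
`(1 - 2 c_Q²) ∑_{j=1}^{T} ‖δ j‖² ≤ 2 c_Q² ℓ_a² ∑_{j=2}^{T} ‖x j - x (j-1)‖²`. -/
theorem delta_compression_accumulated_error_bound {d k : ℕ} (la cQ : ℝ) (hcQ : 0 ≤ cQ)
    (a : EuclideanSpace ℝ (Fin d) → EuclideanSpace ℝ (Fin k))
    (ha : ∀ y z, ‖a y - a z‖ ≤ la * ‖y - z‖)
    (Q : EuclideanSpace ℝ (Fin k) → EuclideanSpace ℝ (Fin k))
    (hQ : ∀ z, ‖z - Q z‖ ≤ cQ * ‖z‖)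
    (T : ℕ) (x : ℕ → EuclideanSpace ℝ (Fin d))
    (m δ : ℕ → EuclideanSpace ℝ (Fin k))
    (hm1 : m 1 = a (x 1))
    (hm : ∀ j, 2 ≤ j → j ≤ T → m j = m (j - 1) + Q (a (x j) - m (j - 1)))
    (hδ : ∀ j, δ j = a (x j) - m j) :
    (1 - 2 * cQ ^ 2) * ∑ j ∈ Finset.Icc 1 T, ‖δ j‖ ^ 2
      ≤ 2 * cQ ^ 2 * la ^ 2 * ∑ j ∈ Finset.Icc 2 T, ‖x j - x (j - 1)‖ ^ 2 :=
  delta_compression_accumulated_error_bound_general la cQ a ha Q hQ T x m δ hm1 hm hδ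
end

section
/- (Lemma GenOne, gradient-error bounds in the K-machine chain) For every sample ξ and model x: (i) ‖Δ^{(Q,i)}_ξ(x)‖ ≤ c_Q C_{a_i} C_{f∘a_K∘…∘a_{i+1}} for every i = 1,…,K−1, where the realized quantized backward gradient v satisfies ‖v − z‖ ≤ c_Q‖z‖ for the true backward gradient z; (ii) ‖Δ^{(i)}_ξ(x)‖ ≤ C_{a_i} L_{f∘a_K∘…∘a_{i+1}} ‖δ^{(i)}_ξ(x)‖ + C_{f∘a_K∘…∘a_{i+1}} L_{a_i} ‖δ^{(i−1)}_ξ(x)‖ for every i = 1,…,K−1 (with δ^{(0)} = 0); (iii) ‖Δ^{(K)}_ξ(x)‖ ≤ L_{f∘a_K} ‖δ^{(K−1)}_ξ(x)‖; and consequently (iv) the concatenated quantization error Δ^{(Q)}_ξ = (Δ^{(Q,1)}_ξ, …, Δ^{(Q,K−1)}_ξ) satisfies ‖Δ^{(Q)}_ξ(x)‖ ≤ c_Q C̃, where C̃ = √(Σ_{i=1}^{K−1} C_{a_i}² C_{f∘a_K∘…∘a_{i+1}}²). -/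
/-!
Every gradient error is the adjoint of a Jacobian applied to a gradient of a tail composition,
or a difference of two such terms. Splitting `A† g - B† g' = A† (g - g') + (A - B)† g'` and
using `‖A†‖ = ‖A‖` reduces the bounds to the assumed bounds on the Jacobians and on the
gradients. The backpropagated gradients are partial gradients of `φ`: `φ` restricted to one
block of its argument is `φ` composed with an affine map whose linear part has norm at most `1`,
so partial gradients inherit the bound and the Lipschitz constant of `∇φ`.
-/

noncomputable section

/-- `ℝⁿ` with the Euclidean norm. -/
abbrev Euc (n : ℕ) : Type := EuclideanSpace ℝ (Fin n)

namespace WithLp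

variable (E F : Type*) [NormedAddCommGroup E] [NormedSpace ℝ E]
  [NormedAddCommGroup F] [NormedSpace ℝ F]

def inlL : E →L[ℝ] WithLp 2 (E × F) :=
  LinearMap.mkContinuous
    ((WithLp.linearEquiv 2 ℝ (E × F)).symm.toLinearMap ∘ₗ LinearMap.inl ℝ E F) 1
    fun u => by simp [WithLp.norm_toLp_fst]

def inrL : F →L[ℝ] WithLp 2 (E × F) :=
  LinearMap.mkContinuous
    ((WithLp.linearEquiv 2 ℝ (E × F)).symm.toLinearMap ∘ₗ LinearMap.inr ℝ E F) 1
    fun u => by simp [WithLp.norm_toLp_snd]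

variable {E F}

@[simp]
theorem inlL_apply (u : E) : inlL E F u = toLp 2 (u, 0) := rfl

@[simp]
theorem inrL_apply (u : F) : inrL E F u = toLp 2 (0, u) := rfl

theorem norm_inlL_le : ‖inlL E F‖ ≤ 1 :=
  LinearMap.mkContinuous_norm_le _ zero_le_one _

theorem norm_inrL_le : ‖inrL E F‖ ≤ 1 :=
  LinearMap.mkContinuous_norm_le _ zero_le_one _

theorem toLp_eq_inlL_add (u : E) (y : F) : toLp 2 (u, y) = inlL E F u + toLp 2 (0, y) := by
  simp [← toLp_add]

omit [NormedSpace ℝ E] [NormedSpace ℝ F] in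
theorem norm_toLp_sub_toLp_of_snd_eq (u u' : E) (y : F) :
    ‖toLp 2 (u, y) - toLp 2 (u', y)‖ = ‖u - u'‖ := by
  rw [← toLp_sub, Prod.mk_sub_mk, sub_self, norm_toLp_fst]

end WithLp

namespace PiLp

variable {ι : Type*} [Fintype ι] [DecidableEq ι] (β : ι → Type*)
  [∀ i, NormedAddCommGroup (β i)] [∀ i, NormedSpace ℝ (β i)]

def singleL (i : ι) : β i →L[ℝ] PiLp 2 β :=
  LinearMap.mkContinuous
    ((WithLp.linearEquiv 2 ℝ (∀ i, β i)).symm.toLinearMap ∘ₗ LinearMap.single ℝ β i) 1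
    fun u => by simp

variable {β}

@[simp]
theorem singleL_apply (i : ι) (u : β i) : singleL β i u = single 2 i u := rfl

theorem norm_singleL_le (i : ι) : ‖singleL β i‖ ≤ 1 :=
  LinearMap.mkContinuous_norm_le _ zero_le_one _

end PiLp

section Adjoint

variable {E F : Type*} [NormedAddCommGroup E] [InnerProductSpace ℝ E] [CompleteSpace E]
  [NormedAddCommGroup F] [InnerProductSpace ℝ F] [CompleteSpace F]

theorem ContinuousLinearMap.norm_adjoint_apply_le (A : E →L[ℝ] F) (u : F) :
    ‖A.adjoint u‖ ≤ ‖A‖ * ‖u‖ := by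
  simpa only [ContinuousLinearMap.adjoint.norm_map] using A.adjoint.le_opNorm u

theorem ContinuousLinearMap.norm_adjoint_apply_le_of_norm_le_one {A : E →L[ℝ] F} (hA : ‖A‖ ≤ 1)
    (u : F) : ‖A.adjoint u‖ ≤ ‖u‖ :=
  (A.norm_adjoint_apply_le u).trans (mul_le_of_le_one_left (norm_nonneg u) hA)

theorem norm_adjoint_apply_sub_le_of_relative_error {A : E →L[ℝ] F} {v g : F} {Ca C cQ : ℝ}
    (hA : ‖A‖ ≤ Ca) (hv : ‖v - g‖ ≤ cQ * ‖g‖) (hg : ‖g‖ ≤ C) (hcQ : 0 ≤ cQ) :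
    ‖A.adjoint (v - g)‖ ≤ cQ * Ca * C :=
  calc ‖A.adjoint (v - g)‖ ≤ ‖A‖ * ‖v - g‖ := A.norm_adjoint_apply_le _
    _ ≤ Ca * (cQ * C) := by
        gcongr
        · exact (norm_nonneg _).trans hA
        · exact hv.trans (by gcongr)
    _ = cQ * Ca * C := by ring

theorem norm_adjoint_apply_sub_adjoint_apply_le {A B : E →L[ℝ] F} {g g' : F}
    {Ca La Lg Cg d d' : ℝ} (hA : ‖A‖ ≤ Ca) (hAB : ‖A - B‖ ≤ La * d) (hg : ‖g - g'‖ ≤ Lg * d')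
    (hg' : ‖g'‖ ≤ Cg) :
    ‖A.adjoint g - B.adjoint g'‖ ≤ Ca * Lg * d' + Cg * La * d := by
  have hsplit : A.adjoint g - B.adjoint g' = A.adjoint (g - g') + (A - B).adjoint g' := by
    rw [map_sub, map_sub, sub_apply]
    abel
  calc ‖A.adjoint g - B.adjoint g'‖ ≤ ‖A.adjoint (g - g')‖ + ‖(A - B).adjoint g'‖ :=
        hsplit ▸ norm_add_le _ _
    _ ≤ ‖A‖ * ‖g - g'‖ + ‖A - B‖ * ‖g'‖ :=
        add_le_add (A.norm_adjoint_apply_le _) ((A - B).norm_adjoint_apply_le _)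
    _ ≤ Ca * (Lg * d') + La * d * Cg := by
        gcongr
        · exact (norm_nonneg _).trans hA
        · exact (norm_nonneg _).trans hAB
    _ = Ca * Lg * d' + Cg * La * d := by ring

end Adjoint

section GradientAlongAffineMap

variable {E F : Type*} [NormedAddCommGroup E] [InnerProductSpace ℝ E] [CompleteSpace E]
  [NormedAddCommGroup F] [InnerProductSpace ℝ F] [CompleteSpace F]
  {f : F → ℝ} {ι : E →L[ℝ] F}

theorem gradient_comp_add_const {c : F} {w : E} (hf : DifferentiableAt ℝ f (ι w + c)) :
    gradient (fun w => f (ι w + c)) w = ι.adjoint (gradient f (ι w + c)) := by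
  have hcomp : HasFDerivAt (fun w => f (ι w + c)) ((fderiv ℝ f (ι w + c)).comp ι) w :=
    hf.hasFDerivAt.comp w (ι.hasFDerivAt.add_const c)
  refine ext_inner_right ℝ fun u => ?_
  rw [inner_gradient_left, hcomp.fderiv, ContinuousLinearMap.adjoint_inner_left,
    inner_gradient_left]
  rfl

theorem norm_gradient_comp_add_const_le (hι : ‖ι‖ ≤ 1) {c : F} {w : E}
    (hf : DifferentiableAt ℝ f (ι w + c)) :
    ‖gradient (fun w => f (ι w + c)) w‖ ≤ ‖gradient f (ι w + c)‖ := by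
  rw [gradient_comp_add_const hf]
  exact ContinuousLinearMap.norm_adjoint_apply_le_of_norm_le_one hι _

theorem norm_gradient_comp_add_const_sub_le (hι : ‖ι‖ ≤ 1) (hf : Differentiable ℝ f)
    (c c' : F) (w w' : E) :
    ‖gradient (fun w => f (ι w + c)) w - gradient (fun w => f (ι w + c')) w'‖
      ≤ ‖gradient f (ι w + c) - gradient f (ι w' + c')‖ := by
  rw [gradient_comp_add_const (hf _), gradient_comp_add_const (hf _), ← map_sub]
  exact ContinuousLinearMap.norm_adjoint_apply_le_of_norm_le_one hι _

end GradientAlongAffineMap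

section PartialGradient

variable {E P : Type*} [NormedAddCommGroup E] [InnerProductSpace ℝ E] [CompleteSpace E]
  [NormedAddCommGroup P] [InnerProductSpace ℝ P] [CompleteSpace P]

omit [CompleteSpace E] [CompleteSpace P] in
theorem comp_toLp_eq_comp_inlL_add (φ : WithLp 2 (E × P) → ℝ) (x : P) :
    (fun w => φ (WithLp.toLp 2 (w, x))) = fun w => φ (WithLp.inlL E P w + WithLp.toLp 2 (0, x)) :=
  funext fun w => by rw [WithLp.toLp_eq_inlL_add]

theorem norm_gradient_comp_toLp_prod_le {φ : WithLp 2 (E × P) → ℝ} {C : ℝ}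
    (hφ : Differentiable ℝ φ) (hC : ∀ p, ‖gradient φ p‖ ≤ C) (x : P) (u : E) :
    ‖gradient (fun w => φ (WithLp.toLp 2 (w, x))) u‖ ≤ C := by
  rw [comp_toLp_eq_comp_inlL_add]
  exact (norm_gradient_comp_add_const_le (ι := WithLp.inlL E P) WithLp.norm_inlL_le
    (hφ _)).trans (hC _)

theorem norm_gradient_comp_toLp_prod_sub_le {φ : WithLp 2 (E × P) → ℝ} {L : ℝ}
    (hφ : Differentiable ℝ φ) (hL : ∀ p q, ‖gradient φ p - gradient φ q‖ ≤ L * ‖p - q‖)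
    (x : P) (u u' : E) :
    ‖gradient (fun w => φ (WithLp.toLp 2 (w, x))) u
      - gradient (fun w => φ (WithLp.toLp 2 (w, x))) u'‖ ≤ L * ‖u - u'‖ := by
  rw [comp_toLp_eq_comp_inlL_add]
  refine (norm_gradient_comp_add_const_sub_le (ι := WithLp.inlL E P) WithLp.norm_inlL_le hφ
    _ _ u u').trans ?_
  rw [← WithLp.toLp_eq_inlL_add, ← WithLp.toLp_eq_inlL_add,
    ← WithLp.norm_toLp_sub_toLp_of_snd_eq u u' x]
  exact hL _ _

/-- `g` is `φ (z, ·)` restricted to the `i`-th block of its argument, so `∇g (x i)` is the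
`i`-th block of `∇φ (z, x)`. -/
theorem norm_gradient_sub_gradient_le_of_factor {ι : Type*} [Fintype ι] [DecidableEq ι]
    {β : ι → Type*} [∀ i, NormedAddCommGroup (β i)] [∀ i, InnerProductSpace ℝ (β i)]
    [∀ i, CompleteSpace (β i)] {φ : WithLp 2 (E × PiLp 2 β) → ℝ} (hφ : Differentiable ℝ φ)
    {i : ι} {g g' : β i → ℝ} {z z' : E}
    (hg : ∀ y : PiLp 2 β, g (y i) = φ (WithLp.toLp 2 (z, y)))
    (hg' : ∀ y : PiLp 2 β, g' (y i) = φ (WithLp.toLp 2 (z', y))) (x : PiLp 2 β) :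
    ‖gradient g (x i) - gradient g' (x i)‖
      ≤ ‖gradient φ (WithLp.toLp 2 (z, x)) - gradient φ (WithLp.toLp 2 (z', x))‖ := by
  set σ := (WithLp.inrL E (PiLp 2 β)).comp (PiLp.singleL β i)
  have hσ : ‖σ‖ ≤ 1 := (ContinuousLinearMap.opNorm_comp_le _ _).trans
    (mul_le_one₀ WithLp.norm_inrL_le (norm_nonneg _) (PiLp.norm_singleL_le i))
  have hshift : ∀ (z : E) (y : β i), σ y + WithLp.toLp 2 (z, x - PiLp.single 2 i (x i))
      = WithLp.toLp 2 (z, PiLp.single 2 i y + (x - PiLp.single 2 i (x i))) := by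
    intro z y
    simp [σ, ← WithLp.toLp_add]
  have hfactor : ∀ {h : β i → ℝ} {z : E},
      (∀ y : PiLp 2 β, h (y i) = φ (WithLp.toLp 2 (z, y))) →
        h = fun y => φ (σ y + WithLp.toLp 2 (z, x - PiLp.single 2 i (x i))) := by
    intro h z hh
    funext y
    rw [hshift, ← hh]
    simp
  rw [hfactor hg, hfactor hg']
  simpa [hshift] using norm_gradient_comp_add_const_sub_le hσ hφ
    (WithLp.toLp 2 (z, x - PiLp.single 2 i (x i)))
    (WithLp.toLp 2 (z', x - PiLp.single 2 i (x i))) (x i) (x i)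

end PartialGradient

theorem sqrt_sum_sq_le_mul_sqrt_sum_sq {ι : Type*} {s : Finset ι} {u b : ι → ℝ} {c : ℝ}
    (hc : 0 ≤ c) (hu : ∀ j ∈ s, |u j| ≤ c * b j) :
    √(∑ j ∈ s, u j ^ 2) ≤ c * √(∑ j ∈ s, b j ^ 2) := by
  have hsq : ∀ j ∈ s, u j ^ 2 ≤ c ^ 2 * b j ^ 2 := fun j hj => by
    rw [← mul_pow, ← sq_abs]
    exact pow_le_pow_left₀ (abs_nonneg _) (hu j hj) 2
  calc √(∑ j ∈ s, u j ^ 2) ≤ √(c ^ 2 * ∑ j ∈ s, b j ^ 2) := by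
        rw [Finset.mul_sum]
        exact Real.sqrt_le_sqrt (Finset.sum_le_sum hsq)
    _ = c * √(∑ j ∈ s, b j ^ 2) := by rw [Real.sqrt_mul (sq_nonneg c), Real.sqrt_sq hc]

/-- **Lemma GenOne: gradient-error bounds in the K-machine chain.**
Machines are indexed by `j = 0, …, K-1` (machine `j` is the paper's machine `j+1`);
activation levels by `i = 0, …, K-1` (level `0` is the raw sample, level `i` is the paper's
`ā⁽ⁱ⁾`).  Machine `j ≤ K-2` computes `a j : ℝ^{kdim j} → ℝ^{ddim j} → ℝ^{kdim (j+1)}`; the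
last machine carries the loss `Ftop` (the paper's `f ∘ a_K`).  `φ i` (for `1 ≤ i ≤ K-1`)
is the paper's tail composition `f ∘ a_K ∘ ⋯ ∘ a_{i+1}`, as a function of the level-`i`
activation and the full model.  With messages `msg` in place of the true activations
`abar`, message errors `δ⁽ⁱ⁾ = abar i - msg i`, and gradient errors `Δ⁽ⁱ⁾`, `Δ^{(Q,i)}`,
`Δ⁽ᴷ⁾` of the AC-SGD algorithm, one has (i) `‖Δ^{(Q,i)}‖ ≤ c_Q C_{a_i} C_{φ_i}`,
(ii) `‖Δ⁽ⁱ⁾‖ ≤ C_{a_i} L_{φ_i} ‖δ⁽ⁱ⁾‖ + C_{φ_i} L_{a_i} ‖δ⁽ⁱ⁻¹⁾‖`,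
(iii) `‖Δ⁽ᴷ⁾‖ ≤ L_{f∘a_K} ‖δ⁽ᴷ⁻¹⁾‖`, and (iv) `‖Δ^{(Q)}‖ ≤ c_Q C̃` for the concatenated
quantization error, `C̃ = √(∑ C_{a_i}² C_{φ_i}²)`. -/
theorem chain_gradient_error_bounds
    (K : ℕ) (hK : 2 ≤ K)
    -- dimensions of the activation spaces (level 0 = input) and of the weight spaces
    (kdim ddim : ℕ → ℕ)
    -- the sub-networks and the final loss (`Ftop` is the paper's `f ∘ a_K`)
    (a : (j : ℕ) → Euc (kdim j) → Euc (ddim j) → Euc (kdim (j + 1)))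
    (Ftop : Euc (kdim (K - 1)) → Euc (ddim (K - 1)) → ℝ)
    -- the tail compositions `φ i = f ∘ a_K ∘ ⋯ ∘ a_{i+1}`, as functions of the level-`i`
    -- activation and the full model
    (φ : (i : ℕ) → WithLp 2 (Euc (kdim i) × PiLp 2 (fun j : Fin K => Euc (ddim j))) → ℝ)
    -- the model
    (x : PiLp 2 (fun j : Fin K => Euc (ddim j)))
    (hφtop : ∀ (z : Euc (kdim (K - 1)))
        (xx : PiLp 2 (fun j : Fin K => Euc (ddim j))),
      φ (K - 1) ((WithLp.equiv 2 _).symm (z, xx)) = Ftop z (xx ⟨K - 1, by omega⟩))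
    -- constants (indexed so that `Ca j`, `La j`, `la j` refer to machine `j`, i.e. the
    -- paper's `a_{j+1}`, and `Lφ i`, `Cφ i` to the paper's `φ_i`)
    (Ca La Lφ Cφ : ℕ → ℝ) (cQ : ℝ) (hcQ : 0 ≤ cQ)
    -- Assumption GA1
    (hφdiff : ∀ i (hi1 : 1 ≤ i) (hi2 : i ≤ K - 1), Differentiable ℝ (φ i))
    (hφLip : ∀ i (hi1 : 1 ≤ i) (hi2 : i ≤ K - 1),
      ∀ p q, ‖gradient (φ i) p - gradient (φ i) q‖ ≤ Lφ i * ‖p - q‖)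
    (hφBdd : ∀ i (hi1 : 1 ≤ i) (hi2 : i ≤ K - 1), ∀ p, ‖gradient (φ i) p‖ ≤ Cφ i)
    (hJacW : ∀ j (hj : j ≤ K - 2), ∀ z y, ‖fderiv ℝ (a j z) y‖ ≤ Ca j)
    (hJacLip : ∀ j (hj : j ≤ K - 2), ∀ z z' y,
      ‖fderiv ℝ (a j z) y - fderiv ℝ (a j z') y‖ ≤ La j * ‖z - z'‖)
    -- true activations along the chain, and the (buffered) messages
    (abar msg : (i : ℕ) → Euc (kdim i))
    -- the realized quantized backward gradients
    (v : (j : ℕ) → Euc (kdim (j + 1)))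
    (hv : ∀ j (hj : j ≤ K - 2),
      ‖v j - gradient (fun w => φ (j + 1) ((WithLp.equiv 2 _).symm (w, x))) (msg (j + 1))‖
        ≤ cQ * ‖gradient (fun w => φ (j + 1) ((WithLp.equiv 2 _).symm (w, x))) (msg (j + 1))‖)
    -- the gradient errors
    (Δ ΔQ : (j : ℕ) → Euc (ddim j))
    (hΔ : ∀ j (hj : j ≤ K - 2), Δ j =
      (fderiv ℝ (a j (msg j)) (x ⟨j, by omega⟩)).adjoint
        (gradient (fun w => φ (j + 1) ((WithLp.equiv 2 _).symm (w, x))) (msg (j + 1)))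
      - (fderiv ℝ (a j (abar j)) (x ⟨j, by omega⟩)).adjoint
        (gradient (fun w => φ (j + 1) ((WithLp.equiv 2 _).symm (w, x))) (abar (j + 1))))
    (hΔK : Δ (K - 1) =
      gradient (Ftop (msg (K - 1))) (x ⟨K - 1, by omega⟩)
      - gradient (Ftop (abar (K - 1))) (x ⟨K - 1, by omega⟩))
    (hΔQ : ∀ j (hj : j ≤ K - 2), ΔQ j =
      (fderiv ℝ (a j (msg j)) (x ⟨j, by omega⟩)).adjoint
        (v j - gradient (fun w => φ (j + 1) ((WithLp.equiv 2 _).symm (w, x))) (msg (j + 1)))) :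
    (∀ j, j ≤ K - 2 → ‖ΔQ j‖ ≤ cQ * Ca j * Cφ (j + 1)) ∧
    (∀ j, j ≤ K - 2 → ‖Δ j‖ ≤
      Ca j * Lφ (j + 1) * ‖abar (j + 1) - msg (j + 1)‖
        + Cφ (j + 1) * La j * ‖abar j - msg j‖) ∧
    ‖Δ (K - 1)‖ ≤ Lφ (K - 1) * ‖abar (K - 1) - msg (K - 1)‖ ∧
    Real.sqrt (∑ j ∈ Finset.range (K - 1), ‖ΔQ j‖ ^ 2)
      ≤ cQ * Real.sqrt (∑ j ∈ Finset.range (K - 1), (Ca j) ^ 2 * (Cφ (j + 1)) ^ 2) := by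
  have hsliceBdd : ∀ j ≤ K - 2, ∀ w,
      ‖gradient (fun w => φ (j + 1) ((WithLp.equiv 2 _).symm (w, x))) w‖ ≤ Cφ (j + 1) :=
    fun j hj => norm_gradient_comp_toLp_prod_le (hφdiff _ (by omega) (by omega))
      (hφBdd _ (by omega) (by omega)) x
  have hsliceLip : ∀ j ≤ K - 2, ∀ w w',
      ‖gradient (fun w => φ (j + 1) ((WithLp.equiv 2 _).symm (w, x))) w
        - gradient (fun w => φ (j + 1) ((WithLp.equiv 2 _).symm (w, x))) w'‖
        ≤ Lφ (j + 1) * ‖w - w'‖ :=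
    fun j hj => norm_gradient_comp_toLp_prod_sub_le (hφdiff _ (by omega) (by omega))
      (hφLip _ (by omega) (by omega)) x
  have hΔQ_le : ∀ j ≤ K - 2, ‖ΔQ j‖ ≤ cQ * Ca j * Cφ (j + 1) := fun j hj => by
    rw [hΔQ j hj]
    exact norm_adjoint_apply_sub_le_of_relative_error (hJacW j hj _ _) (hv j hj)
      (hsliceBdd j hj _) hcQ
  refine ⟨hΔQ_le, fun j hj => ?_, ?_, ?_⟩
  · rw [hΔ j hj, norm_sub_rev (abar _), norm_sub_rev (abar _)]
    exact norm_adjoint_apply_sub_adjoint_apply_le (hJacW j hj _ _) (hJacLip j hj _ _ _)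
      (hsliceLip j hj _ _) (hsliceBdd j hj _)
  · rw [hΔK, norm_sub_rev (abar _),
      ← WithLp.norm_toLp_sub_toLp_of_snd_eq (msg (K - 1)) (abar (K - 1)) x]
    refine (norm_gradient_sub_gradient_le_of_factor (hφdiff _ (by omega) le_rfl)
      (fun y => (hφtop _ y).symm) (fun y => (hφtop _ y).symm) x).trans ?_
    exact hφLip _ (by omega) le_rfl _ _
  · have hΔQ_abs_le : ∀ j ∈ Finset.range (K - 1), |‖ΔQ j‖| ≤ cQ * (Ca j * Cφ (j + 1)) :=
      fun j hj => by
        rw [abs_norm, ← mul_assoc]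
        exact hΔQ_le j (by rw [Finset.mem_range] at hj; omega)
    simpa only [mul_pow] using sqrt_sum_sq_le_mul_sqrt_sum_sq hcQ hΔQ_abs_le
end
end
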